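/- arXiv:1007.1045 — 2 statements merged into one kernel-verified Lean document; each statement's English description precedes it below -/
import Mathlib

section
/- The class of languages recognized by counting automata over P(Σ) is closed under concatenation: given such automata recognizing L_A and L_B, there exists a counting automaton over P(Σ) recognizing L_A·L_B. -/
/-- Concatenation of languages. -/
def conc {σ : Type*} (L M : Set (List σ)) : Set (List σ) :=
  {w | ∃ u ∈ L, ∃ v ∈ M, w = u ++ v}

/-- The language of one-letter words with letters from `S ⊆ Σ`. -/
def letters {σ : Type*} (S : Set σ) : Set (List σ) := {w | ∃ x ∈ S, w = [x]}

/-- A counting automaton over `P(Σ)`: states `f₁,…,f_k` (`k ≥ 1`), the first state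
being the initial state, transition weight languages `L_{ij} ⊆ Σ`, and final weights
`{ε}` (final states) or `∅` (non-final states). -/
structure CA (σ : Type*) where
  k : ℕ
  pos : 0 < k
  L : Fin k → Fin k → Set σ
  final : Fin k → Bool

/-- The behavior of each state: `f_i(0)` is the final weight and
`f_i(n+1) = ⋃_j L_{ij}·f_j(n)`. -/
def CA.f {σ : Type*} (A : CA σ) : ℕ → Fin A.k → Set (List σ)
  | 0, i => if A.final i then {([] : List σ)} else ∅
  | n + 1, i => ⋃ j, conc (letters (A.L i j)) (A.f n j)

/-- The language recognized by a counting automaton over `P(Σ)`: `⋃_n f₁(n)`. -/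
def CA.lang {σ : Type*} (A : CA σ) : Set (List σ) := ⋃ n, A.f n ⟨0, A.pos⟩

/-!
The automaton for `L_A · L_B` runs `A` on the first states and `B` on the rest. A state `i` of
`A` may, in addition to its own moves, take any move of the initial state of `B` when `i` is
final, and it stays final only if the initial state of `B` is final as well; there are no moves
back from `B` to `A`. By induction on the counter, the copy of `i` then has behaviour
`f(n) = ⋃_{m + n' = n} f^A_i(m) · f^B_1(n')`, and taking the union over `n` gives `L_A · L_B`.
-/

open Finset.HasAntidiagonal

section ConcatenationAutomaton

variable {σ : Type*}

lemma conc_assoc (L M N : Set (List σ)) : conc (conc L M) N = conc L (conc M N) := by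
  ext w
  constructor
  · rintro ⟨_, ⟨u, hu, v, hv, rfl⟩, x, hx, rfl⟩
    exact ⟨u, hu, v ++ x, ⟨v, hv, x, hx, rfl⟩, List.append_assoc u v x⟩
  · rintro ⟨u, hu, _, ⟨v, hv, x, hx, rfl⟩, rfl⟩
    exact ⟨u ++ v, ⟨u, hu, v, hv, rfl⟩, x, hx, (List.append_assoc u v x).symm⟩

lemma iUnion_conc {ι : Sort*} (L : ι → Set (List σ)) (M : Set (List σ)) :
    conc (⋃ i, L i) M = ⋃ i, conc (L i) M := by
  ext w; simp [conc]; grind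

lemma conc_iUnion {ι : Sort*} (L : Set (List σ)) (M : ι → Set (List σ)) :
    conc L (⋃ i, M i) = ⋃ i, conc L (M i) := by
  ext w; simp [conc]; grind

@[simp] lemma empty_conc (M : Set (List σ)) : conc ∅ M = ∅ := by
  ext w; simp [conc]

@[simp] lemma nil_conc (M : Set (List σ)) : conc {[]} M = M := by
  ext w; simp [conc]

@[simp] lemma letters_empty : letters (∅ : Set σ) = ∅ := by
  ext w; simp [letters]

lemma iUnion_fin_add {α : Type*} {a b : ℕ} (g : Fin (a + b) → Set α) :
    ⋃ j, g j = (⋃ j, g (Fin.castAdd b j)) ∪ ⋃ j, g (Fin.natAdd a j) := by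
  rw [← finSumFinEquiv.surjective.iUnion_comp g, Set.iUnion_sum]
  simp

lemma biUnion_antidiagonal_succ {α : Type*} (g : ℕ × ℕ → Set α) (n : ℕ) :
    ⋃ p ∈ antidiagonal (n + 1), g p = g (0, n + 1) ∪ ⋃ p ∈ antidiagonal n, g (p.1 + 1, p.2) := by
  rw [Finset.Nat.antidiagonal_succ, Finset.cons_eq_insert, Finset.set_biUnion_insert,
    Finset.map_eq_image, Finset.set_biUnion_finset_image]
  rfl

lemma iUnion_biUnion_antidiagonal {α : Type*} (g : ℕ × ℕ → Set α) :
    ⋃ n : ℕ, ⋃ p ∈ antidiagonal n, g p = ⋃ p, g p := by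
  ext x; simp

namespace CA

variable (A B : CA σ)

def start : Fin A.k := ⟨0, A.pos⟩

lemma f_succ (n : ℕ) (i : Fin A.k) : A.f (n + 1) i = ⋃ j, conc (letters (A.L i j)) (A.f n j) :=
  rfl

lemma f_zero_conc (i : Fin A.k) (M : Set (List σ)) :
    conc (A.f 0 i) M = if A.final i then M else ∅ := by
  by_cases h : A.final i <;> simp [f, h]

lemma f_succ_conc (n : ℕ) (i : Fin A.k) (M : Set (List σ)) :
    conc (A.f (n + 1) i) M = ⋃ j, conc (letters (A.L i j)) (conc (A.f n j) M) := by
  simp only [f_succ, iUnion_conc, conc_assoc]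

def append : CA σ where
  k := A.k + B.k
  pos := Nat.add_pos_left A.pos _
  L := Fin.addCases
    (fun i => Fin.addCases (A.L i) fun j => if A.final i then B.L B.start j else ∅)
    (fun i => Fin.addCases (fun _ => ∅) (B.L i))
  final := Fin.addCases (fun i => A.final i && B.final B.start) B.final

@[simp] lemma append_L_castAdd_castAdd (i j : Fin A.k) :
    (A.append B).L (Fin.castAdd B.k i) (Fin.castAdd B.k j) = A.L i j := by
  simp [append]

@[simp] lemma append_L_castAdd_natAdd (i : Fin A.k) (j : Fin B.k) :
    (A.append B).L (Fin.castAdd B.k i) (Fin.natAdd A.k j) =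
      if A.final i then B.L B.start j else ∅ := by
  simp [append]

@[simp] lemma append_L_natAdd_castAdd (i : Fin B.k) (j : Fin A.k) :
    (A.append B).L (Fin.natAdd A.k i) (Fin.castAdd B.k j) = ∅ := by
  simp [append]

@[simp] lemma append_L_natAdd_natAdd (i j : Fin B.k) :
    (A.append B).L (Fin.natAdd A.k i) (Fin.natAdd A.k j) = B.L i j := by
  simp [append]

@[simp] lemma append_final_castAdd (i : Fin A.k) :
    (A.append B).final (Fin.castAdd B.k i) = (A.final i && B.final B.start) := by
  simp [append]

@[simp] lemma append_final_natAdd (j : Fin B.k) :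
    (A.append B).final (Fin.natAdd A.k j) = B.final j := by
  simp [append]

lemma append_f_natAdd (n : ℕ) (j : Fin B.k) : (A.append B).f n (Fin.natAdd A.k j) = B.f n j := by
  induction n generalizing j with
  | zero => simp [f]
  | succ n ih => exact (iUnion_fin_add _).trans (by simp [ih, f_succ])

lemma append_f_succ_castAdd (n : ℕ) (i : Fin A.k) :
    (A.append B).f (n + 1) (Fin.castAdd B.k i) =
      (if A.final i then B.f (n + 1) B.start else ∅) ∪
        ⋃ j, conc (letters (A.L i j)) ((A.append B).f n (Fin.castAdd B.k j)) := by
  refine (iUnion_fin_add _).trans ?_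
  rw [Set.union_comm]
  by_cases h : A.final i <;> simp [h, append_f_natAdd, f_succ]

lemma append_f_castAdd (n : ℕ) (i : Fin A.k) :
    (A.append B).f n (Fin.castAdd B.k i) =
      ⋃ p ∈ antidiagonal n, conc (A.f p.1 i) (B.f p.2 B.start) := by
  induction n generalizing i with
  | zero =>
    by_cases h : A.final i <;> by_cases h' : B.final B.start <;> simp [f, h, h']
  | succ n ih =>
    simp only [append_f_succ_castAdd, ih, biUnion_antidiagonal_succ, f_zero_conc, f_succ_conc,
      conc_iUnion]
    congr 1
    rw [Set.iUnion_comm]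
    simp only [Set.iUnion_comm (ι := Fin A.k)]

lemma lang_append : (A.append B).lang = conc A.lang B.lang := by
  change ⋃ n, (A.append B).f n (Fin.castAdd B.k A.start) =
    conc (⋃ m, A.f m A.start) (⋃ n, B.f n B.start)
  rw [iUnion_conc]
  simp only [append_f_castAdd, iUnion_biUnion_antidiagonal, conc_iUnion]
  exact Set.iUnion_prod' _

end CA

end ConcatenationAutomaton

theorem stmt9_general {σ : Type*} (L₁ L₂ : Set (List σ))
    (h₁ : ∃ A : CA σ, A.lang = L₁) (h₂ : ∃ B : CA σ, B.lang = L₂) :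
    ∃ C : CA σ, C.lang = conc L₁ L₂ := by
  obtain ⟨A, rfl⟩ := h₁
  obtain ⟨B, rfl⟩ := h₂
  exact ⟨A.append B, A.lang_append B⟩

/-- The class of languages recognized by counting automata over `P(Σ)` is closed
under concatenation. -/
theorem stmt9 {σ : Type*} [Fintype σ] (L₁ L₂ : Set (List σ))
    (h₁ : ∃ A : CA σ, A.lang = L₁) (h₂ : ∃ B : CA σ, B.lang = L₂) :
    ∃ C : CA σ, C.lang = conc L₁ L₂ :=
  stmt9_general L₁ L₂ h₁ h₂
end

section
/- For n ≥ 1, the number of words of length n in the language (ab*a)* over Σ = {a,b} equals the Fibonacci number F_{n−1}, where F₀ = 1, F₁ = 0, F₂ = 1 under the convention F_{n+2} = F_{n+1} + F_n with the initial conditions making the count of length-0 words 1 and length-1 words 0. -/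
/-- The Kleene star of a language. -/
def kstar {σ : Type*} (L : Set (List σ)) : Set (List σ) :=
  {w | ∃ l : List (List σ), (∀ u ∈ l, u ∈ L) ∧ w = l.flatten}

/-- The number of words of length `n` in the language `(ab*a)*` over `Σ = {a,b}`
equals `g(n)`, where `g(0) = 1`, `g(1) = 0` and `g(n+2) = g(n+1) + g(n)` (so for
`n ≥ 1` it is the Fibonacci number `F_{n-1}` in the convention of the paper). -/
theorem stmt18 {σ : Type*} (a b : σ) (hab : a ≠ b)
    (g : ℕ → ℕ) (hg0 : g 0 = 1) (hg1 : g 1 = 0)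
    (hg : ∀ n, g (n + 2) = g (n + 1) + g n)
    (L : Set (List σ))
    (hL : L = kstar {w | ∃ m : ℕ, w = a :: (List.replicate m b ++ [a])}) :
    ∀ n : ℕ, ({w ∈ L | w.length = n} : Set (List σ)).ncard = g n := by
  subst hL
  set B : Set (List σ) := {w | ∃ m : ℕ, w = a :: (List.replicate m b ++ [a])} with hB
  have hnil : ([] : List σ) ∈ kstar B := ⟨[], by simp, rfl⟩
  have hcons : ∀ (m : ℕ) (w : List σ), w ∈ kstar B →
      a :: (List.replicate m b ++ a :: w) ∈ kstar B := by
    rintro m w ⟨l, hl, rfl⟩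
    refine ⟨(a :: (List.replicate m b ++ [a])) :: l, ?_, by simp⟩
    rintro u hu
    rcases List.mem_cons.mp hu with h | h
    · exact h ▸ ⟨m, rfl⟩
    · exact hl u h
  have hdes : ∀ w : List σ, w ∈ kstar B → w ≠ [] →
      ∃ m w', w' ∈ kstar B ∧ w = a :: (List.replicate m b ++ a :: w') := by
    rintro w ⟨l, hl, rfl⟩ hne
    cases l with
    | nil => simp at hne
    | cons u l =>
      obtain ⟨m, rfl⟩ := hl u (by simp)
      exact ⟨m, l.flatten, ⟨l, fun v hv => hl v (by simp [hv]), rfl⟩, by simp⟩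
  set S : ℕ → Set (List σ) := fun n => {w ∈ kstar B | w.length = n} with hS
  -- base cases
  have base0 : S 0 = {([] : List σ)} := by
    ext w
    simp only [hS, Set.mem_setOf_eq, Set.mem_singleton_iff, List.length_eq_zero_iff]
    constructor
    · rintro ⟨_, rfl⟩; rfl
    · rintro rfl; exact ⟨hnil, rfl⟩
  have base1 : S 1 = (∅ : Set (List σ)) := by
    ext w
    simp only [hS, Set.mem_setOf_eq, Set.mem_empty_iff_false, iff_false, not_and]
    intro hw hlen
    obtain ⟨m, w', _, rfl⟩ := hdes w hw (by rintro rfl; simp at hlen)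
    simp at hlen
  -- each element of S (n+1) starts with a
  have hhead : ∀ n w, w ∈ S (n + 1) → w = a :: w.tail := by
    intro n w hw
    obtain ⟨hw, hlen⟩ := hw
    obtain ⟨m, w', _, rfl⟩ := hdes w hw (by rintro rfl; simp at hlen)
    rfl
  -- the key decomposition
  have key : ∀ n, S (n + 2) =
      (fun w => a :: b :: w.tail) '' S (n + 1) ∪ (fun w => a :: a :: w) '' S n := by
    intro n
    ext w
    constructor
    · rintro ⟨hw, hlen⟩
      obtain ⟨m, w', hw', rfl⟩ := hdes w hw (by rintro rfl; simp at hlen)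
      simp only [List.length_cons, List.length_append, List.length_replicate,
        List.length_cons] at hlen
      cases m with
      | zero =>
        right
        exact ⟨w', ⟨hw', by omega⟩, by simp⟩
      | succ m =>
        left
        refine ⟨a :: (List.replicate m b ++ a :: w'), ⟨hcons m w' hw', by simp; omega⟩, ?_⟩
        simp [List.replicate_succ]
    · rintro (⟨v, ⟨hv', hlen⟩, rfl⟩ | ⟨v, ⟨hv', hlen⟩, rfl⟩)
      · obtain ⟨m, w', hw', rfl⟩ := hdes v hv' (by rintro rfl; simp at hlen)
        constructor
        · simpa [List.replicate_succ] using hcons (m + 1) w' hw'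
        · simp at hlen ⊢
          omega
      · constructor
        · simpa using hcons 0 v hv'
        · simp [hlen]
    -- injectivity / disjointness facts
  have hinj1 : ∀ n, Set.InjOn (fun w => a :: b :: w.tail) (S (n + 1)) := by
    intro n w1 h1 w2 h2 he
    simp only [List.cons.injEq] at he
    rw [hhead n w1 h1, hhead n w2 h2, he.2.2]
  have hinj2 : ∀ n : ℕ, Set.InjOn (fun w => a :: a :: w) (S n) := by
    intro n w1 _ w2 _ he
    simpa using he
  have hdisj : ∀ n, Disjoint ((fun w => a :: b :: w.tail) '' S (n + 1))
      ((fun w => a :: a :: w) '' S n) := by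
    intro n
    rw [Set.disjoint_left]
    rintro w ⟨v, _, rfl⟩ ⟨u, _, he⟩
    simp only [List.cons.injEq] at he
    exact hab he.2.1
  -- main two-step induction
  have main : ∀ n, ((S n).Finite ∧ (S n).ncard = g n) ∧
      ((S (n + 1)).Finite ∧ (S (n + 1)).ncard = g (n + 1)) := by
    intro n
    induction n with
    | zero =>
      refine ⟨⟨by rw [base0]; exact Set.finite_singleton _, by rw [base0, hg0]; simp⟩,
        ⟨by rw [base1]; exact Set.finite_empty, by rw [base1, hg1]; simp⟩⟩
    | succ k ih =>
      obtain ⟨⟨hf0, hc0⟩, ⟨hf1, hc1⟩⟩ := ih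
      have hfin : (S (k + 2)).Finite := by
        rw [key k]
        exact (hf1.image _).union (hf0.image _)
      refine ⟨⟨hf1, hc1⟩, hfin, ?_⟩
      rw [key k, Set.ncard_union_eq (hdisj k) (hf1.image _) (hf0.image _),
        Set.ncard_image_of_injOn (hinj1 k), Set.ncard_image_of_injOn (hinj2 k),
        hc1, hc0, hg k]
  exact fun n => ((main n).1).2
end
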